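/- arXiv:1410.4329 — 6 statements merged into one kernel-verified Lean document; each statement's English description precedes it below -/
import Mathlib

section
/- Let C = (c_{ij}) be an N×N nonnegative real matrix with zero diagonal, and suppose its infinity-norm r := max_i ∑_j c_{ij} satisfies r < 1. For each i, let B_i be the N×N matrix equal to the identity except that its i-th row is replaced by the i-th row of C. Then the infinity-norm of the product Q := B_N B_{N-1} ⋯ B_1 satisfies ‖Q‖_∞ := max_i ∑_j Q_{ij} ≤ r. -/
/-!
Each `B i` is substochastic (nonnegative with row sums `≤ 1`), and substochastic matrices form a
monoid. In `Q = B (N-1) * ⋯ * B 0` the factors to the left of `B i` leave row `i` untouched, so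
row `i` of `Q` is the row `C i` multiplied by a substochastic product, which cannot increase its
sum beyond `∑ j, C i j ≤ r`.
-/

open Finset

namespace Matrix

variable {R m n : Type*} [Fintype n]

section Substochastic

variable [Semiring R] [PartialOrder R] [IsOrderedRing R]

theorem mulVec_mono_of_nonneg {M : Matrix m n R} (hM : ∀ i j, 0 ≤ M i j) {u v : n → R}
    (huv : u ≤ v) : M *ᵥ u ≤ M *ᵥ v :=
  fun i => dotProduct_le_dotProduct_of_nonneg_left huv (hM i)

variable [DecidableEq n]

/-- Row-substochastic matrices, as a submonoid of the matrix monoid. -/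
def subStochastic (R n : Type*) [Fintype n] [DecidableEq n] [Semiring R] [PartialOrder R]
    [IsOrderedRing R] : Submonoid (Matrix n n R) where
  carrier := {M | (∀ i j, 0 ≤ M i j) ∧ M *ᵥ 1 ≤ 1}
  mul_mem' {M N} hM hN := by
    refine ⟨fun i j => sum_nonneg fun k _ => mul_nonneg (hM.1 _ _) (hN.1 _ _), ?_⟩
    rw [← mulVec_mulVec]
    exact (mulVec_mono_of_nonneg hM.1 hN.2).trans hM.2
  one_mem' := ⟨fun i j => by by_cases h : i = j <;> simp [one_apply, h], by simp⟩

theorem mem_subStochastic_iff_sum {M : Matrix n n R} :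
    M ∈ subStochastic R n ↔ (∀ i j, 0 ≤ M i j) ∧ ∀ i, ∑ j, M i j ≤ 1 := by
  simp [subStochastic, Pi.le_def, mulVec, dotProduct]

theorem sum_vecMul_le_of_mem_subStochastic {P : Matrix n n R} (hP : P ∈ subStochastic R n)
    {v : n → R} (hv : 0 ≤ v) : ∑ j, (v ᵥ* P) j ≤ ∑ i, v i :=
  calc ∑ j, (v ᵥ* P) j = v ⬝ᵥ (P *ᵥ 1) := by rw [dotProduct_mulVec, dotProduct_one]
    _ ≤ v ⬝ᵥ 1 := dotProduct_le_dotProduct_of_nonneg_left hP.2 hv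
    _ = ∑ i, v i := dotProduct_one v

theorem updateRow_one_mem_subStochastic {i : n} {v : n → R} (hv : 0 ≤ v) (hv1 : ∑ j, v j ≤ 1) :
    updateRow (1 : Matrix n n R) i v ∈ subStochastic R n := by
  have hone := mem_subStochastic_iff_sum.1 (subStochastic R n).one_mem
  refine mem_subStochastic_iff_sum.2 ⟨fun k j => ?_, fun k => ?_⟩ <;>
    rcases eq_or_ne k i with rfl | hk
  · rw [updateRow_self]
    exact hv j
  · simpa only [updateRow_ne hk] using hone.1 k j
  · simpa only [updateRow_self] using hv1
  · simpa only [updateRow_ne hk] using hone.2 k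

end Substochastic

section RowFixing

variable [DecidableEq n] [Semiring R]

theorem mul_row_eq_of_row_eq_one_row {M : Matrix n n R} {i : n} (h : M i = (1 : Matrix n n R) i)
    (N : Matrix n n R) : (M * N) i = N i := by
  rw [mul_apply_eq_vecMul, h, ← mul_apply_eq_vecMul, one_mul]

theorem list_prod_row_eq_one_row {L : List (Matrix n n R)} {i : n}
    (h : ∀ M ∈ L, M i = (1 : Matrix n n R) i) : L.prod i = (1 : Matrix n n R) i :=
  L.prod_induction (fun M => M i = (1 : Matrix n n R) i)
    (fun _ N hM hN => (mul_row_eq_of_row_eq_one_row hM N).trans hN) rfl h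

end RowFixing

end Matrix

open Matrix

theorem dobrushin_infty_norm_bound_general (N : ℕ) (C : Matrix (Fin N) (Fin N) ℝ)
    (hC_nonneg : ∀ i j, 0 ≤ C i j)
    (r : ℝ) (hr : ∀ i, ∑ j, C i j ≤ r) (hr1 : r < 1)
    (B : Fin N → Matrix (Fin N) (Fin N) ℝ)
    (hB : ∀ i k j, B i k j = if k = i then C i j else (if k = j then 1 else 0))
    (Q : Matrix (Fin N) (Fin N) ℝ)
    (hQ : Q = ((List.finRange N).reverse.map B).prod) :
    ∀ i, ∑ j, Q i j ≤ r := by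
  have hB_eq (a : Fin N) : B a = updateRow 1 a (C a) := by
    ext k j
    rw [hB, updateRow_apply, one_apply]
  intro i
  obtain ⟨pre, post, hsplit⟩ := List.append_of_mem (by simp : i ∈ (List.finRange N).reverse)
  have hi : i ∉ pre := by
    have hnd := List.nodup_reverse.2 (List.nodup_finRange N)
    rw [hsplit] at hnd
    exact fun h => List.disjoint_of_nodup_append hnd h List.mem_cons_self
  have hpre : (pre.map B).prod i = (1 : Matrix (Fin N) (Fin N) ℝ) i :=
    list_prod_row_eq_one_row <| List.forall_mem_map.2 fun a ha =>
      (hB_eq a).symm ▸ updateRow_ne (ne_of_mem_of_not_mem ha hi).symm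
  have hpost : (post.map B).prod ∈ subStochastic ℝ (Fin N) :=
    Submonoid.list_prod_mem _ <| List.forall_mem_map.2 fun a _ =>
      (hB_eq a).symm ▸ updateRow_one_mem_subStochastic (hC_nonneg a) ((hr a).trans hr1.le)
  have hrow : Q i = C i ᵥ* (post.map B).prod := by
    rw [hQ, hsplit, List.map_append, List.prod_append, mul_row_eq_of_row_eq_one_row hpre,
      List.map_cons, List.prod_cons, mul_apply_eq_vecMul, hB_eq i, updateRow_self]
  calc ∑ j, Q i j = ∑ j, (C i ᵥ* (post.map B).prod) j := by rw [hrow]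
    _ ≤ ∑ j, C i j := sum_vecMul_le_of_mem_subStochastic hpost (hC_nonneg i)
    _ ≤ r := hr i

/-- Let `C` be an `N×N` nonnegative matrix with zero diagonal whose maximal
row sum `r` satisfies `r < 1`. With `B i` the identity matrix whose `i`-th row is replaced
by the `i`-th row of `C`, the product `Q = B (N-1) * ⋯ * B 0` has all row sums `≤ r`. -/
theorem dobrushin_infty_norm_bound (N : ℕ) (C : Matrix (Fin N) (Fin N) ℝ)
    (hC_nonneg : ∀ i j, 0 ≤ C i j) (hC_diag : ∀ i, C i i = 0)
    (r : ℝ) (hr : ∀ i, ∑ j, C i j ≤ r) (hr1 : r < 1)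
    (B : Fin N → Matrix (Fin N) (Fin N) ℝ)
    (hB : ∀ i k j, B i k j = if k = i then C i j else (if k = j then 1 else 0))
    (Q : Matrix (Fin N) (Fin N) ℝ)
    (hQ : Q = ((List.finRange N).reverse.map B).prod) :
    ∀ i, ∑ j, Q i j ≤ r :=
  dobrushin_infty_norm_bound_general N C hC_nonneg r hr hr1 B hB Q hQ
end

section
/- Let C = (c_{ij}) be an N×N nonnegative real matrix with zero diagonal, and suppose its 1-norm r₁ := max_j ∑_i c_{ij} satisfies r₁ < 1. For each i, let B_i be the N×N matrix equal to the identity except that its i-th row is replaced by the i-th row of C, and let Q := B_N B_{N-1} ⋯ B_1. Then ‖Q‖₁ := max_j ∑_k Q_{kj} ≤ r₁/(1 − r₁). -/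
/-- Let `C` be an `N×N` nonnegative matrix with zero diagonal whose maximal
column sum `r₁` satisfies `r₁ < 1`. With `B i` the identity matrix whose `i`-th row is
replaced by the `i`-th row of `C`, the product `Q = B (N-1) * ⋯ * B 0` has all column sums
bounded by `r₁ / (1 - r₁)`. -/
theorem dobrushin_one_norm_bound (N : ℕ) (C : Matrix (Fin N) (Fin N) ℝ)
    (hC_nonneg : ∀ i j, 0 ≤ C i j) (hC_diag : ∀ i, C i i = 0)
    (r₁ : ℝ) (hr : ∀ j, ∑ i, C i j ≤ r₁) (hr1 : r₁ < 1)
    (B : Fin N → Matrix (Fin N) (Fin N) ℝ)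
    (hB : ∀ i k j, B i k j = if k = i then C i j else (if k = j then 1 else 0))
    (Q : Matrix (Fin N) (Fin N) ℝ)
    (hQ : Q = ((List.finRange N).reverse.map B).prod) :
    ∀ j, ∑ k, Q k j ≤ r₁ / (1 - r₁) := by
  set P : ℕ → Matrix (Fin N) (Fin N) ℝ :=
    fun m => ((((List.finRange N).take m).reverse.map B)).prod with hP
  have hP0 : P 0 = 1 := by simp [hP]
  have hPsucc : ∀ m (hm : m < N), P (m+1) = B ⟨m, hm⟩ * P m := by
    intro m hm
    show ((((List.finRange N).take (m+1)).reverse.map B)).prod = _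
    rw [List.take_succ, List.getElem?_eq_getElem (by simpa using hm)]
    simp [hP]
  -- entrywise multiplication formula
  have hmul : ∀ m (hm : m < N) (k : Fin N) (j : Fin N),
      P (m+1) k j = if (k : ℕ) = m then ∑ l, C k l * P m l j else P m k j := by
    intro m hm k j
    rw [hPsucc m hm]
    have : (B ⟨m, hm⟩ * P m) k j = ∑ l, B ⟨m, hm⟩ k l * P m l j := rfl
    rw [this]
    by_cases hk : (k : ℕ) = m
    · have hk' : k = ⟨m, hm⟩ := Fin.ext hk
      simp only [if_pos hk, hk']
      refine Finset.sum_congr rfl fun l _ => ?_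
      rw [hB]; simp
    · have hk' : k ≠ ⟨m, hm⟩ := fun h => hk (by rw [h])
      simp only [if_neg hk]
      have : ∀ l, B ⟨m, hm⟩ k l * P m l j = if k = l then P m l j else 0 := by
        intro l
        rw [hB, if_neg hk']
        by_cases h : k = l <;> simp [h]
      simp only [this]
      simp
  -- key invariant by induction
  have key : ∀ m, m ≤ N → (∀ k j, 0 ≤ P m k j) ∧
      (∀ k j, P m k j = if (k : ℕ) < m then
          (∑ l : Fin N, if (l : ℕ) < (k : ℕ) then C k l * P m l j else 0) +
          (if (k : ℕ) ≤ (j : ℕ) then C k j else 0)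
        else (if k = j then 1 else 0)) := by
    intro m
    induction m with
    | zero =>
      intro _
      constructor
      · intro k j
        rw [hP0, Matrix.one_apply]
        by_cases h : k = j <;> simp [h]
      · intro k j
        rw [hP0, Matrix.one_apply]
        simp
    | succ m ih =>
      intro hm1
      have hm : m < N := lt_of_lt_of_le (Nat.lt_succ_self m) hm1
      obtain ⟨ihpos, ihrec⟩ := ih (le_of_lt hm)
      have hpos : ∀ k j, 0 ≤ P (m+1) k j := by
        intro k j
        rw [hmul m hm]
        by_cases hk : (k : ℕ) = m
        · rw [if_pos hk]
          exact Finset.sum_nonneg fun l _ =>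
            mul_nonneg (hC_nonneg _ _) (ihpos _ _)
        · rw [if_neg hk]; exact ihpos _ _
      refine ⟨hpos, ?_⟩
      intro k j
      by_cases hk : (k : ℕ) = m
      · -- row m: newly computed
        have hlt : (k : ℕ) < m + 1 := by omega
        rw [hmul m hm, if_pos hk, if_pos hlt]
        have step : ∀ l : Fin N, C k l * P m l j =
            (if (l : ℕ) < (k : ℕ) then C k l * P (m+1) l j else 0) +
            (if l = j then (if (l : ℕ) < (k : ℕ) then 0 else C k l) else 0) := by
          intro l
          by_cases hl : (l : ℕ) < (k : ℕ)
          · have hlm : (l : ℕ) ≠ m := by omega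
            rw [if_pos hl, if_pos hl, hmul m hm, if_neg hlm]
            by_cases h : l = j <;> simp [h]
          · have hlm : ¬ (l : ℕ) < m := by omega
            rw [if_neg hl, if_neg hl, ihrec l j, if_neg hlm]
            by_cases h : l = j <;> simp [h]
        rw [Finset.sum_congr rfl fun l _ => step l, Finset.sum_add_distrib]
        congr 1
        rw [Finset.sum_ite_eq' Finset.univ j
          (fun l => if (l : ℕ) < (k : ℕ) then 0 else C k l)]
        simp only [Finset.mem_univ, if_true]
        by_cases h : (j : ℕ) < (k : ℕ)
        · rw [if_pos h, if_neg (show ¬ (k:ℕ) ≤ (j:ℕ) by omega)]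
        · rw [if_neg h, if_pos (show (k:ℕ) ≤ (j:ℕ) by omega)]
      · -- other rows unchanged
        rw [hmul m hm, if_neg hk, ihrec k j]
        by_cases hklt : (k : ℕ) < m
        · rw [if_pos hklt, if_pos (show (k:ℕ) < m + 1 by omega)]
          congr 1
          refine Finset.sum_congr rfl fun l _ => ?_
          by_cases hl : (l : ℕ) < (k : ℕ)
          · have hlm : (l : ℕ) ≠ m := by omega
            rw [if_pos hl, if_pos hl, hmul m hm, if_neg hlm]
          · rw [if_neg hl, if_neg hl]
        · rw [if_neg hklt, if_neg (show ¬ (k:ℕ) < m + 1 by omega)]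
  have hQN : Q = P N := by
    have h : (List.finRange N).take N = List.finRange N :=
      List.take_of_length_le (by simp)
    rw [hQ]
    show _ = ((((List.finRange N).take N).reverse.map B)).prod
    rw [h]
  obtain ⟨hpos, hrec⟩ := key N (le_refl N)
  rw [← hQN] at hpos hrec
  -- now the column-sum estimate
  intro j
  have hQrec : ∀ k : Fin N, Q k j =
      (∑ l : Fin N, if (l : ℕ) < (k : ℕ) then C k l * Q l j else 0) +
      (if (k : ℕ) ≤ (j : ℕ) then C k j else 0) := by
    intro k
    rw [hrec k j, if_pos k.isLt]
  have h1 : ∑ k, Q k j =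
      (∑ l : Fin N, (∑ k : Fin N, if (l : ℕ) < (k : ℕ) then C k l else 0) * Q l j) +
      ∑ k : Fin N, (if (k : ℕ) ≤ (j : ℕ) then C k j else 0) := by
    rw [Finset.sum_congr rfl fun k _ => hQrec k, Finset.sum_add_distrib]
    congr 1
    rw [Finset.sum_comm]
    refine Finset.sum_congr rfl fun l _ => ?_
    rw [Finset.sum_mul]
    refine Finset.sum_congr rfl fun k _ => ?_
    by_cases h : (l : ℕ) < (k : ℕ) <;> simp [h]
  have hb1 : ∀ l : Fin N, (∑ k : Fin N, if (l : ℕ) < (k : ℕ) then C k l else 0) ≤ r₁ := by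
    intro l
    refine le_trans (Finset.sum_le_sum fun k _ => ?_) (hr l)
    by_cases h : (l : ℕ) < (k : ℕ) <;> simp [h, hC_nonneg]
  have hb2 : ∑ k : Fin N, (if (k : ℕ) ≤ (j : ℕ) then C k j else 0) ≤ r₁ := by
    refine le_trans (Finset.sum_le_sum fun k _ => ?_) (hr j)
    by_cases h : (k : ℕ) ≤ (j : ℕ) <;> simp [h, hC_nonneg]
  have hs : ∑ k, Q k j ≤ r₁ * (∑ k, Q k j) + r₁ := by
    calc ∑ k, Q k j
        = (∑ l : Fin N, (∑ k : Fin N, if (l : ℕ) < (k : ℕ) then C k l else 0) * Q l j) +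
          ∑ k : Fin N, (if (k : ℕ) ≤ (j : ℕ) then C k j else 0) := h1
      _ ≤ (∑ l : Fin N, r₁ * Q l j) + r₁ := by
          refine add_le_add (Finset.sum_le_sum fun l _ => ?_) hb2
          exact mul_le_mul_of_nonneg_right (hb1 l) (hpos l j)
      _ = r₁ * (∑ k, Q k j) + r₁ := by rw [Finset.mul_sum]
  rw [le_div_iff₀ (by linarith)]
  nlinarith [hs]
end

section
/- With Q = B_N ⋯ B_1 as above (each B_i the identity with i-th row replaced by the i-th row of a nonnegative matrix C with zero diagonal), the entries of Q are given explicitly by: Q_{k1} = 0 for all k, and for 2 ≤ j ≤ N, Q_{kj} = ∑_{h=1}^{j-1} ( ∑_{l=1}^{k-1} ∑_{k > i_l > ⋯ > i_2 > i_1 = h} c_{k,i_l} c_{i_l,i_{l-1}} ⋯ c_{i_2,h} c_{h,j} + c_{h,j} 1_{h=k} ), where empty sums are zero. -/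
/-- explicit formula for the entries of `Q = B (N-1) ⋯ B 0`.
Here `T` is the strictly lower-triangular part of `C`, so that `(T ^ l) k h` is exactly
the sum `∑_{k > i_l > ⋯ > i_2 > i_1 = h} c_{k,i_l} c_{i_l,i_{l-1}} ⋯ c_{i_2,h}` over
strictly decreasing chains of length `l` from `k` down to `h`.  The formula states that
`Q k j = 0` for the first column `j = 0`, and for `j ≥ 1`,
`Q k j = ∑_{h < j} ( ∑_{l=1}^{k} (T^l) k h + 1_{h=k} ) * C h j`. -/
theorem gibbs_matrix_entries (N : ℕ) (C : Matrix (Fin N) (Fin N) ℝ)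
    (hC_nonneg : ∀ i j, 0 ≤ C i j) (hC_diag : ∀ i, C i i = 0)
    (B : Fin N → Matrix (Fin N) (Fin N) ℝ)
    (hB : ∀ i k j, B i k j = if k = i then C i j else (if k = j then 1 else 0))
    (Q : Matrix (Fin N) (Fin N) ℝ)
    (hQ : Q = ((List.finRange N).reverse.map B).prod)
    (T : Matrix (Fin N) (Fin N) ℝ)
    (hT : ∀ a b, T a b = if b < a then C a b else 0) :
    (∀ k j : Fin N, (j : ℕ) = 0 → Q k j = 0) ∧
    (∀ k j : Fin N, 1 ≤ (j : ℕ) →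
      Q k j = ∑ h ∈ Finset.univ.filter (fun h : Fin N => h < j),
        ((∑ l ∈ Finset.Icc 1 (k : ℕ), (T ^ l) k h) + (if h = k then 1 else 0)) * C h j) := by
  classical
  set U : Matrix (Fin N) (Fin N) ℝ := Matrix.of (fun a b => if a < b then C a b else 0) with hU
  set P : ℕ → Matrix (Fin N) (Fin N) ℝ :=
    fun m => ((((List.finRange N).take m).reverse).map B).prod with hPdef
  have hP0 : P 0 = 1 := by simp [hPdef]
  have hPsucc : ∀ m (hm : m < N), P (m+1) = B ⟨m, hm⟩ * P m := by
    intro m hm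
    have h1 : (List.finRange N).take (m+1) = (List.finRange N).take m ++ [⟨m, hm⟩] := by
      rw [List.take_succ]
      congr
      rw [List.getElem?_eq_getElem (by simpa using hm)]
      simp
    simp only [hPdef, h1, List.reverse_append, List.reverse_singleton,
      List.singleton_append, List.map_cons, List.prod_cons]
  -- rows at or above m are identity rows
  have hPhigh : ∀ m (h j : Fin N), m ≤ (h : ℕ) → P m h j = if h = j then 1 else 0 := by
    intro m
    induction m with
    | zero => intro h j _; rw [hP0]; exact Matrix.one_apply
    | succ m ih =>
      intro h j hm
      have hmN : m < N := lt_of_lt_of_le (Nat.lt_of_lt_of_le (Nat.lt_succ_self m) hm) h.isLt.le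
      rw [hPsucc m hmN, Matrix.mul_apply]
      have hne : h ≠ ⟨m, hmN⟩ := by
        intro he; rw [he] at hm; simp at hm
      have hBrow : ∀ x, B ⟨m, hmN⟩ h x * P m x j = (if h = x then 1 else 0) * P m x j := by
        intro x; rw [hB]; simp [hne]
      rw [Finset.sum_congr rfl fun x _ => hBrow x]
      simp only [ite_mul, one_mul, zero_mul]
      rw [Finset.sum_ite_eq (Finset.univ) h (fun x => P m x j)]
      simp [ih h j (Nat.le_of_succ_le hm)]
  -- rows below m are stable
  have hPstab : ∀ m m', m ≤ m' → m' ≤ N → ∀ (h : Fin N) (j : Fin N), (h : ℕ) < m →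
      P m' h j = P m h j := by
    intro m m' hmm' hm'N
    induction m', hmm' using Nat.le_induction with
    | base => intro h j _; rfl
    | succ n hn ih =>
      intro h j hh
      have hnN : n < N := hm'N
      rw [hPsucc n hnN, Matrix.mul_apply]
      have hne : h ≠ ⟨n, hnN⟩ := by
        intro he
        have : (h : ℕ) = n := by rw [he]
        omega
      have hBrow : ∀ x, B ⟨n, hnN⟩ h x * P n x j = (if h = x then 1 else 0) * P n x j := by
        intro x; rw [hB]; simp [hne]
      rw [Finset.sum_congr rfl fun x _ => hBrow x]
      simp only [ite_mul, one_mul, zero_mul]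
      rw [Finset.sum_ite_eq (Finset.univ) h (fun x => P n x j)]
      simp [ih (Nat.le_of_succ_le hnN) h j hh]
  have hQP : Q = P N := by
    rw [hQ, hPdef]
    simp [List.take_of_length_le]
  have hPQ : ∀ m (h j : Fin N), (h : ℕ) < m → m ≤ N → P m h j = Q h j := by
    intro m h j hh hmN
    have h1 : P m h j = P ((h : ℕ) + 1) h j := hPstab _ m hh hmN h j (Nat.lt_succ_self _)
    have h2 : P N h j = P ((h : ℕ) + 1) h j := hPstab _ N h.isLt le_rfl h j (Nat.lt_succ_self _)
    rw [h1, hQP, h2]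
  -- row formula : Q k j = ∑ h, C k h * P k h j
  have hQrow : ∀ (k j : Fin N), Q k j = ∑ h, C k h * P (k : ℕ) h j := by
    intro k j
    have h1 : Q k j = P ((k : ℕ) + 1) k j := by
      rw [hQP]
      exact hPstab ((k : ℕ) + 1) N k.isLt le_rfl k j (Nat.lt_succ_self _)
    rw [h1, hPsucc (k : ℕ) k.isLt, Matrix.mul_apply]
    apply Finset.sum_congr rfl
    intro x _
    congr 1
    rw [hB]
    simp [Fin.eta]
  -- key identity Q = T * Q + U
  have hkey : Q = T * Q + U := by
    ext k j
    rw [hQrow k j, Matrix.add_apply, Matrix.mul_apply]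
    have hsplit : ∀ h : Fin N, C k h * P (k : ℕ) h j =
        T k h * Q h j + (if h = j ∧ ¬ h < k then C k h else 0) := by
      intro h
      by_cases hh : h < k
      · have hhk : (h : ℕ) < (k : ℕ) := hh
        rw [hPQ (k : ℕ) h j hhk k.isLt.le, hT]
        simp [hh]
      · have hkh : (k : ℕ) ≤ (h : ℕ) := not_lt.mp hh
        rw [hPhigh (k : ℕ) h j hkh, hT]
        by_cases hhj : h = j
        · subst hhj; simp [hh]
        · simp [hh, hhj]
    rw [Finset.sum_congr rfl fun h _ => hsplit h, Finset.sum_add_distrib]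
    congr 1
    simp only [ite_and]
    rw [Finset.sum_ite_eq' Finset.univ j (fun x => if ¬ x < k then C k x else 0)]
    rcases lt_trichotomy j k with hlt | heq | hgt
    · simp [hU, hlt, not_lt.mpr hlt.le, Matrix.of_apply, asymm hlt]
    · subst heq; simp [hU, hC_diag, Matrix.of_apply]
    · simp [hU, Matrix.of_apply, hgt, asymm hgt]
  -- nilpotency of T
  have hTnil : ∀ l (k h : Fin N), (k : ℕ) < l → (T ^ l) k h = 0 := by
    intro l
    induction l with
    | zero => intro k h hk; omega
    | succ l ih =>
      intro k h hk
      rw [pow_succ', Matrix.mul_apply]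
      apply Finset.sum_eq_zero
      intro m _
      by_cases hm : m < k
      · rw [ih m h (by have : (m : ℕ) < (k : ℕ) := hm; omega)]
        ring
      · rw [hT]; simp [hm]
  have hTN : T ^ N = 0 := by
    ext k h; rw [Matrix.zero_apply]; exact hTnil N k h k.isLt
  -- geometric expansion
  have geo : ∀ n, Q = (∑ l ∈ Finset.range n, T ^ l) * U + T ^ n * Q := by
    intro n
    induction n with
    | zero => simp
    | succ n ih =>
      calc Q = (∑ l ∈ Finset.range n, T ^ l) * U + T ^ n * Q := ih
        _ = (∑ l ∈ Finset.range n, T ^ l) * U + T ^ n * (T * Q + U) := by rw [← hkey]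
        _ = (∑ l ∈ Finset.range (n+1), T ^ l) * U + T ^ (n+1) * Q := by
            rw [Finset.sum_range_succ, mul_add, add_mul, ← mul_assoc, ← pow_succ]
            abel
  have hQfinal : Q = (∑ l ∈ Finset.range N, T ^ l) * U := by
    have := geo N
    rw [hTN] at this
    simpa using this
  have hentry : ∀ (k j : Fin N), Q k j =
      ∑ h, (∑ l ∈ Finset.range N, (T ^ l) k h) * U h j := by
    intro k j
    rw [hQfinal, Matrix.mul_apply]
    apply Finset.sum_congr rfl
    intro h _
    rw [Matrix.sum_apply]
  constructor
  · intro k j hj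
    rw [hentry k j]
    apply Finset.sum_eq_zero
    intro h _
    have : ¬ h < j := by
      intro hlt
      have : (h : ℕ) < (j : ℕ) := hlt
      omega
    simp [hU, Matrix.of_apply, this]
  · intro k j hj
    rw [hentry k j]
    rw [Finset.sum_filter]
    apply Finset.sum_congr rfl
    intro h _
    by_cases hhj : h < j
    · simp only [hhj, if_pos, hU, Matrix.of_apply]
      congr 1
      -- coefficient identity
      have hsplit0 : Finset.range N = insert 0 (Finset.Ico 1 N) := by
        ext x; simp [Finset.mem_Ico]; omega
      rw [hsplit0, Finset.sum_insert (by simp)]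
      have h0 : (T ^ 0) k h = if h = k then 1 else 0 := by
        rw [pow_zero, Matrix.one_apply]
        by_cases hkh : k = h <;> simp [hkh, eq_comm]
      have hsub : Finset.Icc 1 (k : ℕ) ⊆ Finset.Ico 1 N := by
        intro x hx
        simp only [Finset.mem_Icc] at hx
        simp only [Finset.mem_Ico]
        exact ⟨hx.1, lt_of_le_of_lt hx.2 k.isLt⟩
      have hrest : ∑ l ∈ Finset.Ico 1 N, (T ^ l) k h = ∑ l ∈ Finset.Icc 1 (k : ℕ), (T ^ l) k h := by
        rw [Finset.sum_subset hsub]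
        intro x hx hx'
        simp only [Finset.mem_Ico] at hx
        simp only [Finset.mem_Icc, not_and, not_le] at hx'
        exact hTnil x k h (hx' hx.1)
      rw [h0, hrest]
      ring
    · simp [hhj, hU, Matrix.of_apply]
end

section
/- Suppose μ, ν are probability measures on a Polish metric space (E,d) with d bounded measurable, and μ satisfies the L¹-transport-entropy inequality W_{1,d}(μ,ν) ≤ √(2C H(ν|μ)) for all ν. Then for every Lipschitz function F : E → ℝ with ‖F‖_Lip ≤ 1 and every t > 0, μ(F − ∫F dμ ≥ t) ≤ exp(−t²/(2C)). -/
open MeasureTheory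

/-- The `L¹`-Wasserstein "distance" associated to a cost `ρ`, defined as the infimum of
`∫ ρ(x,y) dπ` over all couplings `π` of `μ` and `ν`. -/
noncomputable def W1 {X : Type*} [MeasurableSpace X] (ρ : X → X → ℝ)
    (μ ν : Measure X) : ℝ :=
  ⨅ π : {π : Measure (X × X) //
      IsProbabilityMeasure π ∧ π.map Prod.fst = μ ∧ π.map Prod.snd = ν},
    ∫ p, ρ p.1 p.2 ∂(π : Measure (X × X))

/-- `ρ` is a metric on `X`. -/
def IsDist {X : Type*} (ρ : X → X → ℝ) : Prop :=
  (∀ x, ρ x x = 0) ∧ (∀ x y, 0 ≤ ρ x y) ∧ (∀ x y, ρ x y = ρ y x) ∧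
  (∀ x y z, ρ x z ≤ ρ x y + ρ y z) ∧ (∀ x y, ρ x y = 0 → x = y)

open Classical in
/-- Relative entropy (Kullback information) `H(ν|μ)`, valued in `[0,∞]`. -/
noncomputable def relEnt {X : Type*} [MeasurableSpace X] (ν μ : Measure X) : ENNReal :=
  if ν ≪ μ ∧ Integrable (fun x => Real.log (ν.rnDeriv μ x).toReal) ν
  then ENNReal.ofReal (∫ x, Real.log (ν.rnDeriv μ x).toReal ∂ν)
  else ⊤

/-!
Tilting `μ` by `e^{λG}`, for a centred `1`-Lipschitz `G`, gives a measure `ν` with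
`H(ν|μ) = λ ∫ G dν - log ∫ e^{λG} dμ`. Coupling `μ` and `ν` shows `∫ G dν ≤ W₁(μ, ν) ≤ √(2 C H(ν|μ))`,
and `λ √(2 C H) ≤ C λ² / 2 + H` then bounds the log-Laplace transform of `G` by `C λ² / 2`:
`G` is sub-Gaussian, and Chernoff's bound gives the tail estimate.
-/

open ProbabilityTheory InformationTheory Real
open scoped NNReal

lemma exists_abs_le_of_abs_sub_le {X : Type*} [Nonempty X] {d : X → X → ℝ} {D : ℝ}
    (hd_bdd : ∀ x y, |d x y| ≤ D) {G : X → ℝ} (hGd : ∀ x y, |G x - G y| ≤ d x y) :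
    ∃ B, ∀ x, |G x| ≤ B := by
  obtain ⟨x₀⟩ := ‹Nonempty X›
  refine ⟨D + |G x₀|, fun x => ?_⟩
  linarith [abs_sub_abs_le_abs_sub (G x) (G x₀), hGd x x₀, le_abs_self (d x x₀), hd_bdd x x₀]

lemma mul_sqrt_two_mul_le_add {t C H : ℝ} (ht : 0 ≤ t) (hC : 0 ≤ C) (hH : 0 ≤ H) :
    t * √(2 * C * H) ≤ C * t ^ 2 / 2 + H := by
  have hsplit : √(2 * C * H) = √C * √(2 * H) := by
    rw [mul_comm 2 C, mul_assoc, sqrt_mul hC]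
  nlinarith [sq_nonneg (√C * t - √(2 * H)), sq_sqrt hC, sq_sqrt (by positivity : 0 ≤ 2 * H)]

section

variable {X : Type*} [MeasurableSpace X]

lemma relEnt_eq_klDiv (ν μ : Measure X) [IsProbabilityMeasure ν] [IsProbabilityMeasure μ] :
    relEnt ν μ = klDiv ν μ := by
  by_cases h : ν ≪ μ ∧ Integrable (llr ν μ) ν
  · rw [relEnt, ← llr_def, if_pos h, klDiv_of_ac_of_integrable h.1 h.2]
    simp
  · rw [relEnt, ← llr_def, if_neg h, eq_comm, klDiv_eq_top_iff]
    exact fun hac hint => h ⟨hac, hint⟩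

lemma integral_sub_integral_le_W1 {d : X → X → ℝ}
    (hd_meas : Measurable (fun p : X × X => d p.1 p.2)) {D : ℝ} (hd_bdd : ∀ x y, |d x y| ≤ D)
    {μ ν : Measure X} [IsProbabilityMeasure μ] [IsProbabilityMeasure ν] {G : X → ℝ}
    (hGμ : Integrable G μ) (hGν : Integrable G ν) (hGd : ∀ x y, G y - G x ≤ d x y) :
    ∫ x, G x ∂ν - ∫ x, G x ∂μ ≤ W1 d μ ν := by
  have : Nonempty {γ : Measure (X × X) //
      IsProbabilityMeasure γ ∧ γ.map Prod.fst = μ ∧ γ.map Prod.snd = ν} :=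
    ⟨⟨μ.prod ν, inferInstance, Measure.fst_prod, Measure.snd_prod⟩⟩
  refine le_ciInf fun ⟨γ, hγ, hfst, hsnd⟩ => ?_
  subst hfst hsnd
  have hG₁ : Integrable (fun p : X × X => G p.1) γ := hGμ.comp_measurable measurable_fst
  have hG₂ : Integrable (fun p : X × X => G p.2) γ := hGν.comp_measurable measurable_snd
  have hd_int : Integrable (fun p : X × X => d p.1 p.2) γ :=
    .of_bound hd_meas.aestronglyMeasurable D (.of_forall fun p => hd_bdd p.1 p.2)
  calc ∫ x, G x ∂(γ.map Prod.snd) - ∫ x, G x ∂(γ.map Prod.fst)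
      = ∫ p, G p.2 - G p.1 ∂γ := by
        rw [integral_map measurable_snd.aemeasurable hGν.aestronglyMeasurable,
          integral_map measurable_fst.aemeasurable hGμ.aestronglyMeasurable,
          integral_sub hG₂ hG₁]
    _ ≤ ∫ p, d p.1 p.2 ∂γ := integral_mono (hG₂.sub hG₁) hd_int fun p => hGd p.1 p.2

lemma llr_tilted_self_ae_eq {μ : Measure X} [SigmaFinite μ] {g : X → ℝ}
    (hg_exp : Integrable (fun x => exp (g x)) μ) :
    llr (μ.tilted g) μ =ᵐ[μ.tilted g] fun x => g x - log (∫ x, exp (g x) ∂μ) :=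
  (tilted_absolutelyContinuous μ g).ae_le (log_rnDeriv_tilted_left_self hg_exp)

lemma klDiv_tilted_self_ne_top {μ : Measure X} [SigmaFinite μ] {g : X → ℝ}
    (hg_exp : Integrable (fun x => exp (g x)) μ) (hg : Integrable g (μ.tilted g)) :
    klDiv (μ.tilted g) μ ≠ ⊤ :=
  klDiv_ne_top (tilted_absolutelyContinuous μ g)
    ((hg.sub (integrable_const _)).congr (llr_tilted_self_ae_eq hg_exp).symm)

lemma log_integral_exp_eq_integral_sub_klDiv {μ : Measure X} [IsProbabilityMeasure μ]
    {g : X → ℝ} (hg_exp : Integrable (fun x => exp (g x)) μ) (hg : Integrable g (μ.tilted g)) :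
    log (∫ x, exp (g x) ∂μ) = ∫ x, g x ∂(μ.tilted g) - (klDiv (μ.tilted g) μ).toReal := by
  have := isProbabilityMeasure_tilted hg_exp
  rw [toReal_klDiv_of_measure_eq (tilted_absolutelyContinuous μ g) (by simp),
    integral_congr_ae (llr_tilted_self_ae_eq hg_exp), integral_sub hg (integrable_const _)]
  simp

lemma integrable_exp_mul_of_abs_le {μ : Measure X} [IsFiniteMeasure μ] {G : X → ℝ}
    (hG : Measurable G) {B : ℝ} (hGb : ∀ x, |G x| ≤ B) (t : ℝ) :
    Integrable (fun x => exp (t * G x)) μ := by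
  refine .of_bound (by fun_prop) (exp (|t| * B)) (.of_forall fun x => ?_)
  rw [norm_eq_abs, abs_exp, exp_le_exp]
  calc t * G x ≤ |t * G x| := le_abs_self _
    _ ≤ |t| * B := by rw [abs_mul]; exact mul_le_mul_of_nonneg_left (hGb x) (abs_nonneg t)

variable {d : X → X → ℝ} (hd_meas : Measurable (fun p : X × X => d p.1 p.2)) {D : ℝ}
  (hd_bdd : ∀ x y, |d x y| ≤ D) {μ : Measure X} [IsProbabilityMeasure μ] {C : ℝ≥0}
  (hT1 : ∀ ν : Measure X, IsProbabilityMeasure ν → klDiv ν μ ≠ ⊤ →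
    W1 d μ ν ≤ √(2 * C * (klDiv ν μ).toReal))
include hd_meas hd_bdd hT1

lemma mgf_le_of_transport_entropy {G : X → ℝ} (hG : Measurable G) {B : ℝ}
    (hGb : ∀ x, |G x| ≤ B) (hGd : ∀ x y, G y - G x ≤ d x y) (hG0 : ∫ x, G x ∂μ = 0)
    {t : ℝ} (ht : 0 ≤ t) : mgf G μ t ≤ exp (C * t ^ 2 / 2) := by
  have hexp : Integrable (fun x => exp (t * G x)) μ := integrable_exp_mul_of_abs_le hG hGb t
  set ν := μ.tilted fun x => t * G x
  have : IsProbabilityMeasure ν := isProbabilityMeasure_tilted hexp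
  have hGν : Integrable G ν := .of_bound hG.aestronglyMeasurable B (.of_forall hGb)
  have hGμ : Integrable G μ := .of_bound hG.aestronglyMeasurable B (.of_forall hGb)
  have hH : 0 ≤ (klDiv ν μ).toReal := ENNReal.toReal_nonneg
  have hW : ∫ x, G x ∂ν ≤ √(2 * C * (klDiv ν μ).toReal) := by
    have := integral_sub_integral_le_W1 hd_meas hd_bdd hGμ hGν hGd
    rw [hG0, sub_zero] at this
    exact this.trans (hT1 ν inferInstance (klDiv_tilted_self_ne_top hexp (hGν.const_mul t)))
  have hlog : log (mgf G μ t) = t * ∫ x, G x ∂ν - (klDiv ν μ).toReal := by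
    rw [mgf, log_integral_exp_eq_integral_sub_klDiv hexp (hGν.const_mul t), integral_const_mul]
  calc mgf G μ t = exp (log (mgf G μ t)) := (exp_log (mgf_pos' (NeZero.ne μ) hexp)).symm
    _ ≤ exp (C * t ^ 2 / 2) := by
      rw [exp_le_exp, hlog]
      linarith [mul_le_mul_of_nonneg_left hW ht, mul_sqrt_two_mul_le_add ht C.coe_nonneg hH]

theorem hasSubgaussianMGF_of_transport_entropy {G : X → ℝ} (hG : Measurable G)
    (hGd : ∀ x y, |G x - G y| ≤ d x y) (hG0 : ∫ x, G x ∂μ = 0) : HasSubgaussianMGF G C μ := by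
  have := nonempty_of_isProbabilityMeasure μ
  obtain ⟨B, hGb⟩ := exists_abs_le_of_abs_sub_le hd_bdd hGd
  refine ⟨integrable_exp_mul_of_abs_le hG hGb, fun t => ?_⟩
  rcases le_total 0 t with ht | ht
  · refine mgf_le_of_transport_entropy hd_meas hd_bdd hT1 hG hGb (fun x y => ?_) hG0 ht
    exact (le_abs_self _).trans (abs_sub_comm (G x) (G y) ▸ hGd x y)
  · have := mgf_le_of_transport_entropy hd_meas hd_bdd hT1 (G := -G) hG.neg
      (by simpa only [Pi.neg_apply, abs_neg] using hGb)
      (fun x y => by simpa only [Pi.neg_apply, neg_sub_neg] using (le_abs_self _).trans (hGd x y))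
      (by simp only [Pi.neg_apply, integral_neg, hG0, neg_zero]) (neg_nonneg.2 ht)
    rwa [mgf_neg, neg_neg, neg_sq] at this

end

theorem transport_entropy_concentration_general
    {E : Type*} [MeasurableSpace E]
    (d : E → E → ℝ)
    (hd_meas : Measurable (fun p : E × E => d p.1 p.2))
    (D : ℝ) (hd_bdd : ∀ x y, d x y ≤ D)
    (μ : Measure E) (hμ : IsProbabilityMeasure μ)
    (C : ℝ)
    (hT1 : ∀ ν : Measure E, IsProbabilityMeasure ν → relEnt ν μ ≠ ⊤ →
      W1 d μ ν ≤ Real.sqrt (2 * C * (relEnt ν μ).toReal)) :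
    ∀ F : E → ℝ, Measurable F → (∀ a b, |F a - F b| ≤ d a b) →
      ∀ t : ℝ, 0 < t →
        μ {x | t ≤ F x - ∫ y, F y ∂μ} ≤ ENNReal.ofReal (Real.exp (-(t ^ 2) / (2 * C))) := by
  intro F hF hFd t ht
  rcases le_or_gt C 0 with hC | hC
  · refine prob_le_one.trans (ENNReal.one_le_ofReal.2 (one_le_exp ?_))
    exact div_nonneg_of_nonpos (neg_nonpos.2 (sq_nonneg t)) (by linarith)
  have hd_abs : ∀ x y, |d x y| ≤ D := fun x y =>
    abs_le.2 ⟨by linarith [abs_nonneg (F x - F y), hFd x y, hd_bdd x y], hd_bdd x y⟩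
  have := nonempty_of_isProbabilityMeasure μ
  obtain ⟨B, hFb⟩ := exists_abs_le_of_abs_sub_le hd_abs hFd
  have hF_int : Integrable F μ := .of_bound hF.aestronglyMeasurable B (.of_forall hFb)
  have hsub : HasSubgaussianMGF (fun x => F x - ∫ y, F y ∂μ) ⟨C, hC.le⟩ μ :=
    hasSubgaussianMGF_of_transport_entropy hd_meas hd_abs
      (fun ν _ => by rw [← relEnt_eq_klDiv]; exact hT1 ν inferInstance)
      (hF.sub measurable_const) (fun x y => by simpa only [sub_sub_sub_cancel_right] using hFd x y)
      (by rw [integral_sub hF_int (integrable_const _)]; simp)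
  rw [← ofReal_measureReal]
  exact ENNReal.ofReal_le_ofReal (hsub.measure_ge_le ht.le)

/-- concentration from the `T₁` transport-entropy inequality, Bobkov–Götze:
if `μ ∈ T₁(C)` on `(E,d)`, then every `1`-Lipschitz `F` satisfies the Gaussian
concentration bound `μ(F − μ(F) ≥ t) ≤ exp(−t²/(2C))`. -/
theorem transport_entropy_concentration
    {E : Type*} [MeasurableSpace E] [TopologicalSpace E] [PolishSpace E] [BorelSpace E]
    (d : E → E → ℝ) (hd : IsDist d)
    (hd_meas : Measurable (fun p : E × E => d p.1 p.2))
    (D : ℝ) (hd_bdd : ∀ x y, d x y ≤ D)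
    (μ : Measure E) (hμ : IsProbabilityMeasure μ)
    (C : ℝ) (hC : 0 < C)
    (hT1 : ∀ ν : Measure E, IsProbabilityMeasure ν → relEnt ν μ ≠ ⊤ →
      W1 d μ ν ≤ Real.sqrt (2 * C * (relEnt ν μ).toReal)) :
    ∀ F : E → ℝ, Measurable F → (∀ a b, |F a - F b| ≤ d a b) →
      ∀ t : ℝ, 0 < t →
        μ {x | t ≤ F x - ∫ y, F y ∂μ} ≤ ENNReal.ofReal (Real.exp (-(t ^ 2) / (2 * C))) :=
  transport_entropy_concentration_general d hd_meas D hd_bdd μ hμ C hT1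
end

section
/- For the two-dimensional Gaussian Gibbs sampler: let μ be the centered Gaussian on ℝ² with covariance matrix [[1, r],[r, 1]], 0 < r < 1, and let P((x₁,x₂), ·) be the law of (Y₁, Y₂) where Y₁ = r x₂ + Z₁ and Y₂ = r Y₁ + Z₂ with Z₁, Z₂ independent N(0, 1−r²). Then for all x = (x₁,x₂), x' = (x₁',x₂'), W_{1,d_{L¹}}(P(x,·), P(x',·)) = (r + r²)|x₂ − x₂'|, where d_{L¹} is the ℓ¹ metric on ℝ². In particular P is a W₁-contraction if and only if r + r² < 1. -/
open MeasureTheory ProbabilityTheory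

/-- The `ℓ¹` metric on `ℝ²`. -/
noncomputable def dL1R2 (a b : ℝ × ℝ) : ℝ := |a.1 - b.1| + |a.2 - b.2|

/-- The one-sweep Gibbs sampler kernel for the centered bivariate Gaussian with
covariance `[[1,r],[r,1]]`: starting from `x = (x₁,x₂)`, it is the law of
`(Y₁, Y₂)` with `Y₁ = r x₂ + Z₁`, `Y₂ = r Y₁ + Z₂`, where `Z₁, Z₂` are i.i.d.
`N(0, 1 − r²)`. -/
noncomputable def gaussGibbsKernel (r : ℝ) (x : ℝ × ℝ) : Measure (ℝ × ℝ) :=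
  ((gaussianReal 0 (Real.toNNReal (1 - r ^ 2))).prod
      (gaussianReal 0 (Real.toNNReal (1 - r ^ 2)))).map
    (fun z : ℝ × ℝ => (r * x.2 + z.1, r * (r * x.2 + z.1) + z.2))

/-! Every kernel `P(x, ·)` is the translate of `P(0, ·)` by `(r x₂, r² x₂)`, and `W₁` between two
translates `μ + a`, `μ + b` of one integrable law is `‖a - b‖₁`: the synchronous coupling
`(w + a, w + b)` has constant cost `‖a - b‖₁`, while the linear functional
`u ↦ sign(a₁ - b₁) u₁ + sign(a₂ - b₂) u₂` is `1`-Lipschitz for the `ℓ¹` metric and its means under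
the two translates differ by exactly `‖a - b‖₁`. -/

section Coupling

variable {X : Type*} [MeasurableSpace X] {ρ : X → X → ℝ} {μ ν : Measure X}

theorem W1_le_integral (hρ : ∀ a b, 0 ≤ ρ a b) (π : Measure (X × X)) [IsProbabilityMeasure π]
    (h₁ : π.map Prod.fst = μ) (h₂ : π.map Prod.snd = ν) :
    W1 ρ μ ν ≤ ∫ p, ρ p.1 p.2 ∂π := by
  refine ciInf_le ⟨0, ?_⟩ (⟨π, ‹_›, h₁, h₂⟩ : {π : Measure (X × X) //
    IsProbabilityMeasure π ∧ π.map Prod.fst = μ ∧ π.map Prod.snd = ν})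
  rintro _ ⟨π, rfl⟩
  exact integral_nonneg fun p => hρ _ _

theorem le_W1 {c : ℝ} (π₀ : Measure (X × X)) [IsProbabilityMeasure π₀]
    (h₀₁ : π₀.map Prod.fst = μ) (h₀₂ : π₀.map Prod.snd = ν)
    (h : ∀ π : Measure (X × X), IsProbabilityMeasure π → π.map Prod.fst = μ →
      π.map Prod.snd = ν → c ≤ ∫ p, ρ p.1 p.2 ∂π) :
    c ≤ W1 ρ μ ν :=
  haveI : Nonempty {π : Measure (X × X) //
      IsProbabilityMeasure π ∧ π.map Prod.fst = μ ∧ π.map Prod.snd = ν} :=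
    ⟨⟨π₀, ‹_›, h₀₁, h₀₂⟩⟩
  le_ciInf fun π => h π.1 π.2.1 π.2.2.1 π.2.2.2

theorem abs_integral_sub_le_integral_cost {π : Measure (X × X)} (h₁ : π.map Prod.fst = μ)
    (h₂ : π.map Prod.snd = ν) {f : X → ℝ} (hfμ : Integrable f μ) (hfν : Integrable f ν)
    (hf : ∀ a b, |f a - f b| ≤ ρ a b) (hρ : Integrable (fun p => ρ p.1 p.2) π) :
    |∫ x, f x ∂μ - ∫ x, f x ∂ν| ≤ ∫ p, ρ p.1 p.2 ∂π := by
  have i₁ : Integrable (fun p => f p.1) π := (h₁ ▸ hfμ).comp_measurable measurable_fst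
  have i₂ : Integrable (fun p => f p.2) π := (h₂ ▸ hfν).comp_measurable measurable_snd
  have e₁ : ∫ x, f x ∂μ = ∫ p, f p.1 ∂π := by
    subst h₁
    exact integral_map measurable_fst.aemeasurable hfμ.aestronglyMeasurable
  have e₂ : ∫ x, f x ∂ν = ∫ p, f p.2 ∂π := by
    subst h₂
    exact integral_map measurable_snd.aemeasurable hfν.aestronglyMeasurable
  rw [e₁, e₂, ← integral_sub i₁ i₂]
  exact abs_integral_le_integral_abs.trans (integral_mono (i₁.sub i₂).abs hρ fun p => hf _ _)

end Coupling

section Translate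

variable {E : Type*} [NormedAddCommGroup E] [MeasurableSpace E] [BorelSpace E]
  [SecondCountableTopology E] {μ : Measure E}

theorem integrable_id_map_add [IsFiniteMeasure μ] (hμ : Integrable id μ) (a : E) :
    Integrable id (μ.map (· + a)) :=
  (integrable_map_measure aestronglyMeasurable_id (by fun_prop)).mpr (hμ.add (integrable_const a))

theorem integral_id_map_add [NormedSpace ℝ E] [CompleteSpace E] [IsProbabilityMeasure μ]
    (hμ : Integrable id μ) (a : E) : ∫ x, x ∂(μ.map (· + a)) = ∫ x, x ∂μ + a := by
  rw [integral_map (f := fun x => x) (by fun_prop)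
      (integrable_id_map_add hμ a).aestronglyMeasurable,
    integral_add (f := fun x => x) hμ (integrable_const a), integral_const, probReal_univ, one_smul]

end Translate

theorem exists_clm_apply_eq_and_abs_le (c : ℝ × ℝ) :
    ∃ L : ℝ × ℝ →L[ℝ] ℝ, L c = |c.1| + |c.2| ∧ ∀ u, |L u| ≤ |u.1| + |u.2| := by
  have abs_sign_le (t : ℝ) : |(SignType.sign t : ℝ)| ≤ 1 := by
    rcases SignType.sign t with _ | _ | _ <;> simp
  refine ⟨(SignType.sign c.1 : ℝ) • ContinuousLinearMap.fst ℝ ℝ ℝ +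
    (SignType.sign c.2 : ℝ) • ContinuousLinearMap.snd ℝ ℝ ℝ, by simp, fun u => ?_⟩
  simp only [add_apply, smul_apply, ContinuousLinearMap.coe_fst', ContinuousLinearMap.coe_snd',
    smul_eq_mul]
  refine (abs_add_le _ _).trans (add_le_add ?_ ?_) <;>
    rw [abs_mul] <;> exact mul_le_of_le_one_left (abs_nonneg _) (abs_sign_le _)

theorem dL1R2_add_left (c u v : ℝ × ℝ) : dL1R2 (c + u) (c + v) = dL1R2 u v := by
  simp [dL1R2]

theorem continuous_dL1R2 : Continuous fun p : (ℝ × ℝ) × (ℝ × ℝ) => dL1R2 p.1 p.2 := by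
  unfold dL1R2; fun_prop

theorem W1_dL1R2_map_add (μ : Measure (ℝ × ℝ)) [IsProbabilityMeasure μ] (hμ : Integrable id μ)
    (a b : ℝ × ℝ) : W1 dL1R2 (μ.map (· + a)) (μ.map (· + b)) = dL1R2 a b := by
  set S : ℝ × ℝ → (ℝ × ℝ) × (ℝ × ℝ) := fun w => (w + a, w + b)
  have hS : Measurable S := by fun_prop
  have : IsProbabilityMeasure (μ.map S) := Measure.isProbabilityMeasure_map hS.aemeasurable
  have hS₁ : (μ.map S).map Prod.fst = μ.map (· + a) := by
    rw [Measure.map_map measurable_fst hS]; rfl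
  have hS₂ : (μ.map S).map Prod.snd = μ.map (· + b) := by
    rw [Measure.map_map measurable_snd hS]; rfl
  have hμa := integrable_id_map_add hμ a
  have hμb := integrable_id_map_add hμ b
  apply le_antisymm
  · calc W1 dL1R2 (μ.map (· + a)) (μ.map (· + b)) ≤ ∫ p, dL1R2 p.1 p.2 ∂(μ.map S) :=
          W1_le_integral (fun u v => add_nonneg (abs_nonneg _) (abs_nonneg _)) _ hS₁ hS₂
      _ = dL1R2 a b := by
          rw [integral_map hS.aemeasurable continuous_dL1R2.aestronglyMeasurable]
          simp only [S, dL1R2_add_left, integral_const, probReal_univ, one_smul]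
  · refine le_W1 (μ.map S) hS₁ hS₂ fun π _ hπ₁ hπ₂ => ?_
    obtain ⟨L, hLab, hL⟩ := exists_clm_apply_eq_and_abs_le (a - b)
    have hcost : Integrable (fun p => dL1R2 p.1 p.2) π := by
      have hd : Integrable (fun p : (ℝ × ℝ) × (ℝ × ℝ) => p.1 - p.2) π :=
        ((hπ₁ ▸ hμa).comp_measurable measurable_fst).sub
          ((hπ₂ ▸ hμb).comp_measurable measurable_snd)
      exact hd.fst.abs.add hd.snd.abs
    calc dL1R2 a b = ∫ x, L x ∂(μ.map (· + a)) - ∫ x, L x ∂(μ.map (· + b)) := by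
          rw [L.integral_comp_comm (φ := fun x => x) hμa, integral_id_map_add hμ,
            L.integral_comp_comm (φ := fun x => x) hμb, integral_id_map_add hμ,
            ← map_sub, add_sub_add_left_eq_sub, hLab]
          rfl
      _ ≤ |∫ x, L x ∂(μ.map (· + a)) - ∫ x, L x ∂(μ.map (· + b))| := le_abs_self _
      _ ≤ ∫ p, dL1R2 p.1 p.2 ∂π :=
          abs_integral_sub_le_integral_cost hπ₁ hπ₂ (L.integrable_comp hμa)
            (L.integrable_comp hμb) (fun u v => by rw [← map_sub]; exact hL (u - v)) hcost

instance (r : ℝ) (x : ℝ × ℝ) : IsProbabilityMeasure (gaussGibbsKernel r x) :=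
  Measure.isProbabilityMeasure_map (by fun_prop)

theorem integrable_id_gaussGibbsKernel (r : ℝ) (x : ℝ × ℝ) :
    Integrable id (gaussGibbsKernel r x) := by
  have hz : Integrable id ((gaussianReal 0 (1 - r ^ 2).toNNReal).prod
      (gaussianReal 0 (1 - r ^ 2).toNNReal)) := IsGaussian.integrable_id
  have hy₁ := (integrable_const (r * x.2)).add hz.fst
  exact (integrable_map_measure aestronglyMeasurable_id (by fun_prop)).mpr
    (hy₁.prodMk ((hy₁.const_mul r).add hz.snd))

theorem gaussGibbsKernel_eq_map_add (r : ℝ) (x : ℝ × ℝ) :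
    gaussGibbsKernel r x = (gaussGibbsKernel r 0).map (· + (r * x.2, r ^ 2 * x.2)) := by
  rw [gaussGibbsKernel, gaussGibbsKernel, Measure.map_map (by fun_prop) (by fun_prop)]
  congr 1
  funext z
  simp only [Function.comp_apply, Prod.snd_zero, Prod.mk_add_mk]
  ring_nf

theorem W1_gaussGibbsKernel (r : ℝ) (x x' : ℝ × ℝ) :
    W1 dL1R2 (gaussGibbsKernel r x) (gaussGibbsKernel r x') = (|r| + r ^ 2) * |x.2 - x'.2| := by
  rw [gaussGibbsKernel_eq_map_add r x, gaussGibbsKernel_eq_map_add r x',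
    W1_dL1R2_map_add _ (integrable_id_gaussGibbsKernel r 0), dL1R2]
  simp only [← mul_sub, abs_mul, abs_pow, sq_abs]
  ring

theorem gauss_gibbs_wasserstein_general (r : ℝ) (hr0 : 0 < r) :
    (∀ x x' : ℝ × ℝ,
      W1 dL1R2 (gaussGibbsKernel r x) (gaussGibbsKernel r x') = (r + r ^ 2) * |x.2 - x'.2|) ∧
    ((∃ κ : ℝ, 0 ≤ κ ∧ κ < 1 ∧ ∀ x y : ℝ × ℝ,
        W1 dL1R2 (gaussGibbsKernel r x) (gaussGibbsKernel r y) ≤ κ * dL1R2 x y) ↔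
      r + r ^ 2 < 1) := by
  have hW (x x' : ℝ × ℝ) :
      W1 dL1R2 (gaussGibbsKernel r x) (gaussGibbsKernel r x') = (r + r ^ 2) * |x.2 - x'.2| := by
    rw [W1_gaussGibbsKernel, abs_of_pos hr0]
  refine ⟨hW, ⟨fun ⟨κ, _, hκ1, hκ⟩ => ?_, fun h => ⟨r + r ^ 2, by positivity, h, fun x y => ?_⟩⟩⟩
  · have h01 := hκ (0, 1) (0, 0)
    simp only [hW, dL1R2, sub_zero, abs_zero, abs_one, zero_add, mul_one] at h01
    linarith
  · rw [hW]
    exact mul_le_mul_of_nonneg_left (le_add_of_nonneg_left (abs_nonneg _)) (by positivity)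

/-- for the two-dimensional Gaussian Gibbs sampler,
`W₁(P(x,·), P(x',·)) = (r + r²) |x₂ − x₂'|` in the `ℓ¹` metric; in particular `P` is a
`W₁`-contraction if and only if `r + r² < 1`. -/
theorem gauss_gibbs_wasserstein (r : ℝ) (hr0 : 0 < r) (hr1 : r < 1) :
    (∀ x x' : ℝ × ℝ,
      W1 dL1R2 (gaussGibbsKernel r x) (gaussGibbsKernel r x') = (r + r ^ 2) * |x.2 - x'.2|) ∧
    ((∃ κ : ℝ, 0 ≤ κ ∧ κ < 1 ∧ ∀ x y : ℝ × ℝ,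
        W1 dL1R2 (gaussGibbsKernel r x) (gaussGibbsKernel r y) ≤ κ * dL1R2 x y) ↔
      r + r ^ 2 < 1) :=
  gauss_gibbs_wasserstein_general r hr0
end

section
/- Gibbs sampler convergence rate: under the Dobrushin uniqueness condition r := max_i ∑_j c_{ij} < 1, for any Lipschitz f on (E^N, d_{L¹}) and any two initial distributions ν₁, ν₂, and any coupling (Z₀(1), Z₀(2)) of (ν₁,ν₂), |ν₁P^k f − ν₂P^k f| ≤ r^k (max_{1≤i≤N} E d(Z₀^i(1), Z₀^i(2))) ∑_{i=1}^N δ_i(f) for all k ≥ 1, where P is the one-sweep Gibbs sampler kernel. -/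
open MeasureTheory

/-- The `L¹` product metric on `E^N`. -/
noncomputable def dL1 {E : Type*} {N : ℕ} (d : E → E → ℝ) (x y : Fin N → E) : ℝ :=
  ∑ i, d (x i) (y i)

/-- One Gibbs-sampler update of coordinate `i`: resample coordinate `i` from the
conditional law `μi i x`, keeping the other coordinates fixed. -/
noncomputable def gstep {E : Type*} [MeasurableSpace E] {N : ℕ}
    (μi : Fin N → (Fin N → E) → Measure E) (i : Fin N) (x : Fin N → E) :
    Measure (Fin N → E) :=
  (μi i x).map (fun t => Function.update x i t)

/-- One full sweep of the Gibbs sampler, updating coordinates `0, 1, …, N-1` in order. -/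
noncomputable def sweep {E : Type*} [MeasurableSpace E] {N : ℕ}
    (μi : Fin N → (Fin N → E) → Measure E) (x : Fin N → E) :
    Measure (Fin N → E) :=
  (List.finRange N).foldl (fun m i => m.bind (gstep μi i)) (Measure.dirac x)

/-- `iterM P k ν` is the law after `k` steps of the Markov kernel `P` started from `ν`. -/
noncomputable def iterM {X : Type*} [MeasurableSpace X] (P : X → Measure X) :
    ℕ → Measure X → Measure X
  | 0, ν => ν
  | (k + 1), ν => (iterM P k ν).bind P

/-!
Call `ε` a vector of coordinatewise Lipschitz coefficients of `g` if
`|g x - g y| ≤ ε i * d (x i) (y i)` whenever `x` and `y` differ only at `i`. Averaging `g` over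
site `i` under `μ_i(·|x)` gives a function with coefficients `ε j + c i j * ε i` at `j ≠ i` and
`c i i * ε i` at `i`: the coefficient at `i` is pushed onto the sites `μ_i` depends on, through the
Kantorovich bound `|∫ h dμ - ∫ h dν| ≤ L * W₁(μ, ν)`. Coefficients only grow until their own
site is averaged, and then each is replaced by a total weight of at most `r` times itself, so
one sweep multiplies `∑ ε` by at most `r`, and `k` sweeps turn `δ` into coefficients of `P^k f`
summing to at most `r^k ∑ δ`. Telescoping coordinate by coordinate under the coupling `π` gives
`|ν₁ P^k f - ν₂ P^k f| ≤ ∑ εᵢ E d(Z₀ⁱ(1), Z₀ⁱ(2))`.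
-/

open MeasureTheory ProbabilityTheory

namespace GibbsSampler

section MeasureFacts

variable {α β : Type*} [MeasurableSpace α] [MeasurableSpace β]

lemma integrable_of_abs_le {μ : Measure α} [IsFiniteMeasure μ] {g : α → ℝ}
    (hg : AEStronglyMeasurable g μ) {C : ℝ} (hC : ∀ x, |g x| ≤ C) : Integrable g μ :=
  .of_bound hg C (.of_forall hC)

lemma integral_bind {m : Measure α} {κ : α → Measure β} (hκ : Measurable κ) {g : β → ℝ}
    (hg : Integrable g (m.bind κ)) :
    ∫ y, g y ∂(m.bind κ) = ∫ x, ∫ y, g y ∂κ x ∂m := by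
  let K : Kernel α β := ⟨κ, hκ⟩
  change ∫ y, g y ∂(K ∘ₘ m) = ∫ x, ∫ y, g y ∂K x ∂m
  change Integrable g (K ∘ₘ m) at hg
  rw [Measure.comp_eq_comp_const_apply] at hg ⊢
  rw [Kernel.integral_comp hg, Kernel.const_apply]

lemma abs_integral_sub_le_integral_of_coupling {μ ν : Measure α} {π : Measure (α × α)}
    [IsFiniteMeasure π] (hπ₁ : π.map Prod.fst = μ) (hπ₂ : π.map Prod.snd = ν)
    {g : α → ℝ} (hg : Measurable g) {C : ℝ} (hC : ∀ x, |g x| ≤ C)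
    {B : α × α → ℝ} (hB : Integrable B π) (hgB : ∀ p, |g p.1 - g p.2| ≤ B p) :
    |∫ x, g x ∂μ - ∫ x, g x ∂ν| ≤ ∫ p, B p ∂π := by
  have hint : ∀ {f : α × α → α}, Measurable f → Integrable (fun p => g (f p)) π :=
    fun hf => integrable_of_abs_le (hg.comp hf).aestronglyMeasurable fun p => hC _
  rw [← hπ₁, ← hπ₂, integral_map measurable_fst.aemeasurable hg.aestronglyMeasurable,
    integral_map measurable_snd.aemeasurable hg.aestronglyMeasurable,
    ← integral_sub (hint measurable_fst) (hint measurable_snd)]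
  exact abs_integral_le_integral_abs.trans
    (integral_mono ((hint measurable_fst).sub (hint measurable_snd)).abs hB hgB)

lemma abs_integral_sub_le_mul_W1 {ρ : α → α → ℝ} (hρ : IsDist ρ)
    (hρ_meas : Measurable fun p : α × α => ρ p.1 p.2) {x₀ : α}
    {μ ν : Measure α} [IsProbabilityMeasure μ] [IsProbabilityMeasure ν]
    (hμ : Integrable (fun t => ρ t x₀) μ) (hν : Integrable (fun t => ρ t x₀) ν)
    {g : α → ℝ} (hg : Measurable g) {C : ℝ} (hC : ∀ x, |g x| ≤ C)
    {L : ℝ} (hL : 0 ≤ L) (hgL : ∀ a b, |g a - g b| ≤ L * ρ a b) :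
    |∫ x, g x ∂μ - ∫ x, g x ∂ν| ≤ L * W1 ρ μ ν := by
  obtain ⟨-, hρ_nonneg, hρ_symm, hρ_tri, -⟩ := hρ
  have : Nonempty {π : Measure (α × α) //
      IsProbabilityMeasure π ∧ π.map Prod.fst = μ ∧ π.map Prod.snd = ν} :=
    ⟨⟨μ.prod ν, inferInstance, by simp, by simp⟩⟩
  rw [W1, Real.mul_iInf_of_nonneg hL]
  refine le_ciInf fun ⟨π, hπ, hπ₁, hπ₂⟩ => ?_
  have hρ_int : Integrable (fun p : α × α => ρ p.1 p.2) π := by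
    have h₁ := (hπ₁ ▸ hμ).comp_measurable measurable_fst
    have h₂ := (hπ₂ ▸ hν).comp_measurable measurable_snd
    refine (h₁.add h₂).mono' hρ_meas.aestronglyMeasurable (.of_forall fun p => ?_)
    rw [Real.norm_of_nonneg (hρ_nonneg _ _)]
    exact (hρ_tri _ x₀ _).trans_eq (by rw [hρ_symm x₀]; rfl)
  rw [← integral_const_mul]
  exact abs_integral_sub_le_integral_of_coupling hπ₁ hπ₂ hg hC (hρ_int.const_mul L)
    fun p => hgL p.1 p.2

lemma isProbabilityMeasure_iterM {P : α → Measure α}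
    (hP : Measurable P) (hP_prob : ∀ x, IsProbabilityMeasure (P x)) (ν : Measure α)
    [IsProbabilityMeasure ν] (k : ℕ) : IsProbabilityMeasure (iterM P k ν) := by
  induction k with
  | zero => assumption
  | succ k ih => exact isProbabilityMeasure_bind hP.aemeasurable (.of_forall hP_prob)

end MeasureFacts

section CoordLipschitz

variable {ι E : Type*}

def CoordLipschitzWith (d : E → E → ℝ) (ε : ι → ℝ) (g : (ι → E) → ℝ) : Prop :=
  ∀ i x y, (∀ j, j ≠ i → x j = y j) → |g x - g y| ≤ ε i * d (x i) (y i)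

theorem CoordLipschitzWith.abs_sub_le_sum [Fintype ι] {d : E → E → ℝ}
    {ε : ι → ℝ} {g : (ι → E) → ℝ} (hg : CoordLipschitzWith d ε g) (x y : ι → E) :
    |g x - g y| ≤ ∑ i, ε i * d (x i) (y i) := by
  classical
  suffices ∀ s : Finset ι, ∀ x, (∀ j ∉ s, x j = y j) →
      |g x - g y| ≤ ∑ i ∈ s, ε i * d (x i) (y i) from this .univ x (by simp)
  intro s
  induction s using Finset.induction_on with
  | empty => intro x hx; simp [funext fun j => hx j (Finset.notMem_empty j)]
  | insert a s ha ih =>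
    intro x hx
    set z := Function.update x a (y a)
    have hz_off : ∀ i ∈ s, z i = x i := fun i hi =>
      Function.update_of_ne (ne_of_mem_of_not_mem hi ha) _ _
    have hz_xa : |g x - g z| ≤ ε a * d (x a) (y a) := by
      simpa [z] using hg a x z fun j hj => (Function.update_of_ne hj _ _).symm
    have hz_y : |g z - g y| ≤ ∑ i ∈ s, ε i * d (x i) (y i) := by
      refine (ih z fun j hj => ?_).trans_eq (Finset.sum_congr rfl fun i hi => by rw [hz_off i hi])
      by_cases hja : j = a
      · simp [z, hja]
      · simp only [z, Function.update_of_ne hja]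
        exact hx j (by simp [hja, hj])
    calc |g x - g y| ≤ |g x - g z| + |g z - g y| := abs_sub_le _ _ _
      _ ≤ _ := add_le_add hz_xa hz_y
      _ = _ := by rw [Finset.sum_insert ha]

theorem CoordLipschitzWith.abs_integral_sub_le [Fintype ι] [MeasurableSpace E] {d : E → E → ℝ}
    {ε : ι → ℝ} (hε : ∀ i, 0 ≤ ε i) {g : (ι → E) → ℝ}
    (hg : CoordLipschitzWith d ε g) (hg_meas : Measurable g) {C : ℝ} (hC : ∀ x, |g x| ≤ C)
    {ν₁ ν₂ : Measure (ι → E)} {π : Measure ((ι → E) × (ι → E))} [IsFiniteMeasure π]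
    (hπ₁ : π.map Prod.fst = ν₁) (hπ₂ : π.map Prod.snd = ν₂)
    (hd_int : ∀ i, Integrable (fun p : (ι → E) × (ι → E) => d (p.1 i) (p.2 i)) π) :
    |∫ x, g x ∂ν₁ - ∫ x, g x ∂ν₂| ≤ (∑ i, ε i) * ⨆ i, ∫ p, d (p.1 i) (p.2 i) ∂π := by
  have hint : ∀ i, Integrable (fun p : (ι → E) × (ι → E) => ε i * d (p.1 i) (p.2 i)) π :=
    fun i => (hd_int i).const_mul _
  calc |∫ x, g x ∂ν₁ - ∫ x, g x ∂ν₂| ≤ ∫ p, ∑ i, ε i * d (p.1 i) (p.2 i) ∂π :=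
        abs_integral_sub_le_integral_of_coupling hπ₁ hπ₂ hg_meas hC
          (integrable_finsetSum _ fun i _ => hint i) fun p => hg.abs_sub_le_sum p.1 p.2
    _ = ∑ i, ε i * ∫ p, d (p.1 i) (p.2 i) ∂π := by
        rw [integral_finsetSum _ fun i _ => hint i]
        simp_rw [integral_const_mul]
    _ ≤ ∑ i, ε i * ⨆ i, ∫ p, d (p.1 i) (p.2 i) ∂π :=
        Finset.sum_le_sum fun i _ =>
          mul_le_mul_of_nonneg_left
            (le_ciSup (f := fun i => ∫ p, d (p.1 i) (p.2 i) ∂π) (Set.finite_range _).bddAbove i)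
            (hε i)
    _ = _ := (Finset.sum_mul ..).symm

theorem CoordLipschitzWith.abs_sub_update_le [DecidableEq ι] {d : E → E → ℝ} {ε : ι → ℝ}
    {g : (ι → E) → ℝ} (hg : CoordLipschitzWith d ε g) {i j : ι} {x y : ι → E}
    (hxy : ∀ l, l ≠ j → x l = y l) (t : E) :
    |g (Function.update x i t) - g (Function.update y i t)| ≤
      Function.update ε i 0 j * d (x j) (y j) := by
  by_cases hji : j = i
  · subst hji
    have : Function.update x j t = Function.update y j t := by
      ext l
      by_cases hl : l = j
      · simp [hl]
      · simp [hl, hxy l hl]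
    simp [this]
  · simpa [hji] using hg j (Function.update x i t) (Function.update y i t) fun l hl => by
      by_cases hli : l = i
      · simp [hli]
      · simp [hli, hxy l hl]

end CoordLipschitz

section Coefficients

variable {ι : Type*} [DecidableEq ι]

def siteCoef (c : ι → ι → ℝ) (i : ι) (ε : ι → ℝ) (j : ι) : ℝ :=
  Function.update ε i 0 j + c i j * ε i

variable {c : ι → ι → ℝ} {ε : ι → ℝ}

lemma siteCoef_nonneg (hc : ∀ i j, 0 ≤ c i j)
    (hε : ∀ j, 0 ≤ ε j) (i j : ι) : 0 ≤ siteCoef c i ε j := by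
  refine add_nonneg ?_ (mul_nonneg (hc i j) (hε i))
  by_cases hji : j = i <;> simp [hji, hε j]

lemma foldr_siteCoef_nonneg (hc : ∀ i j, 0 ≤ c i j)
    (hε : ∀ j, 0 ≤ ε j) (l : List ι) (j : ι) : 0 ≤ l.foldr (siteCoef c) ε j := by
  induction l generalizing j with
  | nil => exact hε j
  | cons i l ih => exact siteCoef_nonneg hc ih i j

lemma le_foldr_siteCoef_of_notMem (hc : ∀ i j, 0 ≤ c i j) (hε : ∀ j, 0 ≤ ε j) {j : ι}
    {l : List ι} (hj : j ∉ l) : ε j ≤ l.foldr (siteCoef c) ε j := by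
  induction l with
  | nil => exact le_rfl
  | cons i l ih =>
    simp only [List.mem_cons, not_or] at hj
    obtain ⟨hji, hjl⟩ := hj
    calc ε j ≤ l.foldr (siteCoef c) ε j := ih hjl
      _ ≤ siteCoef c i (l.foldr (siteCoef c) ε) j := by
        rw [siteCoef, Function.update_of_ne hji]
        exact le_add_of_nonneg_right (mul_nonneg (hc i j) (foldr_siteCoef_nonneg hc hε l i))

variable [Fintype ι] {r : ℝ}

lemma sum_siteCoef (i : ι) :
    ∑ j, siteCoef c i ε j = ∑ j, ε j - ε i + (∑ j, c i j) * ε i := by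
  simp only [siteCoef, Finset.sum_add_distrib, Finset.sum_update_of_mem (Finset.mem_univ i),
    ← Finset.sum_mul, Finset.sum_eq_add_sum_sdiff_singleton_of_mem (Finset.mem_univ i) ε]
  ring

lemma sum_foldr_siteCoef_le (hc : ∀ i j, 0 ≤ c i j) (hr : ∀ i, ∑ j, c i j ≤ r) (hr1 : r ≤ 1)
    (hε : ∀ j, 0 ≤ ε j) {l : List ι} (hl : l.Nodup) :
    ∑ j, l.foldr (siteCoef c) ε j ≤ ∑ j, ε j - (1 - r) * (l.map ε).sum := by
  induction l with
  | nil => simp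
  | cons i l ih =>
    obtain ⟨hil, hl⟩ := List.nodup_cons.1 hl
    have hηi : ε i ≤ l.foldr (siteCoef c) ε i := le_foldr_siteCoef_of_notMem hc hε hil
    rw [List.foldr_cons, sum_siteCoef, List.map_cons, List.sum_cons]
    nlinarith [ih hl, mul_le_mul_of_nonneg_right (hr i) (foldr_siteCoef_nonneg hc hε l i),
      mul_nonneg (sub_nonneg.2 hr1) (sub_nonneg.2 hηi)]

end Coefficients

section SiteUpdate

variable {ι E : Type*} [MeasurableSpace E]

noncomputable def siteAvg [DecidableEq ι] (μi : ι → (ι → E) → Measure E) (i : ι)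
    (g : (ι → E) → ℝ) (x : ι → E) : ℝ :=
  ∫ t, g (Function.update x i t) ∂μi i x

-- `c i j` are the Dobrushin interdependence coefficients; `x₀` is the base point of the
-- first-moment condition that makes `W1` finite.
structure LipschitzSpecification (d : E → E → ℝ) (μi : ι → (ι → E) → Measure E)
    (c : ι → ι → ℝ) (x₀ : E) : Prop where
  isDist : IsDist d
  measurable_dist : Measurable fun p : E × E => d p.1 p.2
  isProbabilityMeasure : ∀ i x, IsProbabilityMeasure (μi i x)
  measurable : ∀ i, Measurable (μi i)
  integrable_dist : ∀ i x, Integrable (fun t => d t x₀) (μi i x)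
  coeff_nonneg : ∀ i j, 0 ≤ c i j
  W1_le : ∀ i j x y, (∀ l, l ≠ j → x l = y l) → W1 d (μi i x) (μi i y) ≤ c i j * d (x j) (y j)

variable [DecidableEq ι] {μi : ι → (ι → E) → Measure E} {g : (ι → E) → ℝ} {C : ℝ}

lemma measurable_siteAvg {i : ι} (hμ : Measurable (μi i))
    (hprob : ∀ x, IsProbabilityMeasure (μi i x)) (hg : Measurable g) :
    Measurable (siteAvg μi i g) := by
  let K : Kernel (ι → E) E := ⟨μi i, hμ⟩
  have : IsMarkovKernel K := ⟨hprob⟩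
  exact (StronglyMeasurable.integral_kernel_prod_right' (κ := K)
    (hg.comp measurable_update').stronglyMeasurable).measurable

lemma abs_siteAvg_le {i : ι} (hprob : ∀ x, IsProbabilityMeasure (μi i x))
    (hC : ∀ x, |g x| ≤ C) (x : ι → E) : |siteAvg μi i g x| ≤ C := by
  simpa [siteAvg] using norm_integral_le_of_norm_le_const (μ := μi i x)
    (f := fun t => g (Function.update x i t)) (.of_forall fun t => hC _)

theorem LipschitzSpecification.coordLipschitzWith_siteAvg {d : E → E → ℝ} {c : ι → ι → ℝ}
    {x₀ : E} (hS : LipschitzSpecification d μi c x₀) {ε : ι → ℝ} (hε : ∀ i, 0 ≤ ε i)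
    (hg_meas : Measurable g) (hC : ∀ x, |g x| ≤ C) (hg : CoordLipschitzWith d ε g) (i : ι) :
    CoordLipschitzWith d (siteCoef c i ε) (siteAvg μi i g) := by
  intro j x y hxy
  have := hS.isProbabilityMeasure i x
  have := hS.isProbabilityMeasure i y
  have hint : ∀ z, Integrable (fun t => g (Function.update z i t)) (μi i x) := fun z =>
    integrable_of_abs_le (hg_meas.comp (measurable_update z)).aestronglyMeasurable fun _ => hC _
  -- First move the configuration under the fixed law `μi i x`, then move the law.
  have h_conf : |siteAvg μi i g x - ∫ t, g (Function.update y i t) ∂μi i x| ≤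
      Function.update ε i 0 j * d (x j) (y j) := by
    rw [siteAvg, ← integral_sub (hint x) (hint y)]
    simpa using norm_integral_le_of_norm_le_const (μ := μi i x)
      (f := fun t => g (Function.update x i t) - g (Function.update y i t))
      (.of_forall (hg.abs_sub_update_le hxy))
  have h_law : |∫ t, g (Function.update y i t) ∂μi i x - siteAvg μi i g y| ≤
      ε i * (c i j * d (x j) (y j)) := by
    refine (abs_integral_sub_le_mul_W1 hS.isDist hS.measurable_dist (hS.integrable_dist i x)
      (hS.integrable_dist i y) (hg_meas.comp (measurable_update y)) (fun _ => hC _) (hε i)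
      fun a b => ?_).trans (mul_le_mul_of_nonneg_left (hS.W1_le i j x y hxy) (hε i))
    simpa using hg i (Function.update y i a) (Function.update y i b) fun l hl => by simp [hl]
  calc |siteAvg μi i g x - siteAvg μi i g y| ≤ _ + _ := abs_sub_le _ _ _
    _ ≤ _ := add_le_add h_conf h_law
    _ = siteCoef c i ε j * d (x j) (y j) := by rw [siteCoef]; ring

lemma measurable_foldr_siteAvg (hμ : ∀ i, Measurable (μi i))
    (hprob : ∀ i x, IsProbabilityMeasure (μi i x)) (l : List ι) (hg : Measurable g) :
    Measurable (l.foldr (siteAvg μi) g) := by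
  induction l with
  | nil => exact hg
  | cons i l ih => exact measurable_siteAvg (hμ i) (hprob i) ih

lemma abs_foldr_siteAvg_le (hprob : ∀ i x, IsProbabilityMeasure (μi i x)) (l : List ι)
    (hC : ∀ x, |g x| ≤ C) (x : ι → E) : |l.foldr (siteAvg μi) g x| ≤ C := by
  induction l generalizing x with
  | nil => exact hC x
  | cons i l ih => exact abs_siteAvg_le (hprob i) ih x

theorem LipschitzSpecification.coordLipschitzWith_foldr_siteAvg {d : E → E → ℝ}
    {c : ι → ι → ℝ} {x₀ : E} (hS : LipschitzSpecification d μi c x₀) {ε : ι → ℝ}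
    (hε : ∀ i, 0 ≤ ε i) (hg_meas : Measurable g) (hC : ∀ x, |g x| ≤ C)
    (hg : CoordLipschitzWith d ε g) (l : List ι) :
    CoordLipschitzWith d (l.foldr (siteCoef c) ε) (l.foldr (siteAvg μi) g) := by
  induction l with
  | nil => exact hg
  | cons i l ih =>
    exact hS.coordLipschitzWith_siteAvg (foldr_siteCoef_nonneg hS.coeff_nonneg hε l)
      (measurable_foldr_siteAvg hS.measurable hS.isProbabilityMeasure l hg_meas)
      (abs_foldr_siteAvg_le hS.isProbabilityMeasure l hC) ih i

end SiteUpdate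

section Sweep

variable {E : Type*} [MeasurableSpace E] {N : ℕ} {μi : Fin N → (Fin N → E) → Measure E}
  {g : (Fin N → E) → ℝ} {C : ℝ}

-- The sweep updates sites `0, …, N - 1` in this order, so its dual applies the site averages
-- in the reverse order: hence `foldr`.
noncomputable def sweepAvg (μi : Fin N → (Fin N → E) → Measure E) (g : (Fin N → E) → ℝ) :
    (Fin N → E) → ℝ :=
  (List.finRange N).foldr (siteAvg μi) g

def sweepCoef (c : Fin N → Fin N → ℝ) (ε : Fin N → ℝ) : Fin N → ℝ :=
  (List.finRange N).foldr (siteCoef c) ε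

lemma iterate_sweepCoef_nonneg {c : Fin N → Fin N → ℝ} (hc : ∀ i j, 0 ≤ c i j)
    {ε : Fin N → ℝ} (hε : ∀ j, 0 ≤ ε j) (k : ℕ) (j : Fin N) : 0 ≤ (sweepCoef c)^[k] ε j :=
  Function.Iterate.rec (fun ε : Fin N → ℝ => ∀ j, 0 ≤ ε j) hε
    (fun _ h => foldr_siteCoef_nonneg hc h _) k j

lemma sum_sweepCoef_le {c : Fin N → Fin N → ℝ} (hc : ∀ i j, 0 ≤ c i j) {r : ℝ}
    (hr : ∀ i, ∑ j, c i j ≤ r) (hr1 : r ≤ 1) {ε : Fin N → ℝ} (hε : ∀ j, 0 ≤ ε j) :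
    ∑ j, sweepCoef c ε j ≤ r * ∑ j, ε j := by
  have := sum_foldr_siteCoef_le hc hr hr1 hε (List.nodup_finRange N)
  rw [← List.ofFn_eq_map, List.sum_ofFn] at this
  rw [sweepCoef]
  linarith

lemma sum_iterate_sweepCoef_le {c : Fin N → Fin N → ℝ} (hc : ∀ i j, 0 ≤ c i j) {r : ℝ}
    (hr : ∀ i, ∑ j, c i j ≤ r) (hr0 : 0 ≤ r) (hr1 : r ≤ 1) {ε : Fin N → ℝ} (hε : ∀ j, 0 ≤ ε j)
    (k : ℕ) : ∑ j, (sweepCoef c)^[k] ε j ≤ r ^ k * ∑ j, ε j := by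
  induction k with
  | zero => simp
  | succ k ih =>
    rw [Function.iterate_succ_apply', pow_succ', mul_assoc]
    exact (sum_sweepCoef_le hc hr hr1 (iterate_sweepCoef_nonneg hc hε k)).trans
      (mul_le_mul_of_nonneg_left ih hr0)

lemma measurable_gstep (hμ : ∀ i, Measurable (μi i))
    (hprob : ∀ i x, IsProbabilityMeasure (μi i x)) (i : Fin N) : Measurable (gstep μi i) := by
  let K : Kernel (Fin N → E) E := ⟨μi i, hμ i⟩
  have : IsMarkovKernel K := ⟨hprob i⟩
  refine Measure.measurable_of_measurable_coe _ fun s hs => ?_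
  simp_rw [gstep, Measure.map_apply (measurable_update _) hs]
  exact Kernel.measurable_kernel_prodMk_left (κ := K) (measurable_update' hs)

lemma integral_gstep (hg : Measurable g) (i : Fin N) (x : Fin N → E) :
    ∫ y, g y ∂gstep μi i x = siteAvg μi i g x :=
  integral_map (measurable_update x).aemeasurable hg.aestronglyMeasurable

lemma isProbabilityMeasure_bind_gstep (hμ : ∀ i, Measurable (μi i))
    (hprob : ∀ i x, IsProbabilityMeasure (μi i x)) (i : Fin N) (m : Measure (Fin N → E))
    [IsProbabilityMeasure m] : IsProbabilityMeasure (m.bind (gstep μi i)) :=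
  isProbabilityMeasure_bind (measurable_gstep hμ hprob i).aemeasurable
    (.of_forall fun x => have := hprob i x; Measure.isProbabilityMeasure_map
      (measurable_update x).aemeasurable)

lemma isProbabilityMeasure_foldl_bind_gstep (hμ : ∀ i, Measurable (μi i))
    (hprob : ∀ i x, IsProbabilityMeasure (μi i x)) (l : List (Fin N)) (m : Measure (Fin N → E))
    [IsProbabilityMeasure m] :
    IsProbabilityMeasure (l.foldl (fun m i => m.bind (gstep μi i)) m) := by
  induction l generalizing m with
  | nil => assumption
  | cons i l ih =>
    have := isProbabilityMeasure_bind_gstep hμ hprob i m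
    exact ih _

lemma measurable_foldl_bind_gstep (hμ : ∀ i, Measurable (μi i))
    (hprob : ∀ i x, IsProbabilityMeasure (μi i x)) (l : List (Fin N))
    {m : (Fin N → E) → Measure (Fin N → E)} (hm : Measurable m) :
    Measurable fun x => l.foldl (fun m i => m.bind (gstep μi i)) (m x) := by
  induction l generalizing m with
  | nil => exact hm
  | cons i l ih => exact ih ((Measure.measurable_bind' (measurable_gstep hμ hprob i)).comp hm)

lemma integral_foldl_bind_gstep (hμ : ∀ i, Measurable (μi i))
    (hprob : ∀ i x, IsProbabilityMeasure (μi i x)) (l : List (Fin N)) (m : Measure (Fin N → E))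
    [IsProbabilityMeasure m] (hg : Measurable g) (hC : ∀ x, |g x| ≤ C) :
    ∫ y, g y ∂(l.foldl (fun m i => m.bind (gstep μi i)) m) =
      ∫ x, l.foldr (siteAvg μi) g x ∂m := by
  induction l generalizing m with
  | nil => rfl
  | cons i l ih =>
    have := isProbabilityMeasure_bind_gstep hμ hprob i m
    have hl_meas := measurable_foldr_siteAvg hμ hprob l hg
    rw [List.foldl_cons, ih, integral_bind (measurable_gstep hμ hprob i)
      (integrable_of_abs_le hl_meas.aestronglyMeasurable (abs_foldr_siteAvg_le hprob l hC))]
    simp_rw [integral_gstep hl_meas, List.foldr_cons]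

lemma measurable_sweep (hμ : ∀ i, Measurable (μi i))
    (hprob : ∀ i x, IsProbabilityMeasure (μi i x)) : Measurable (sweep μi) :=
  measurable_foldl_bind_gstep hμ hprob _ Measure.measurable_dirac

lemma integral_sweep (hμ : ∀ i, Measurable (μi i))
    (hprob : ∀ i x, IsProbabilityMeasure (μi i x)) (hg : Measurable g) (hC : ∀ x, |g x| ≤ C)
    (x : Fin N → E) : ∫ y, g y ∂sweep μi x = sweepAvg μi g x := by
  rw [sweep, integral_foldl_bind_gstep hμ hprob _ _ hg hC,
    integral_dirac' _ _ (measurable_foldr_siteAvg hμ hprob _ hg).stronglyMeasurable, sweepAvg]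

lemma measurable_iterate_sweepAvg (hμ : ∀ i, Measurable (μi i))
    (hprob : ∀ i x, IsProbabilityMeasure (μi i x)) (hg : Measurable g) (k : ℕ) :
    Measurable ((sweepAvg μi)^[k] g) :=
  Function.Iterate.rec Measurable hg (fun _ h => measurable_foldr_siteAvg hμ hprob _ h) k

lemma abs_iterate_sweepAvg_le (hprob : ∀ i x, IsProbabilityMeasure (μi i x))
    (hC : ∀ x, |g x| ≤ C) (k : ℕ) (x : Fin N → E) : |(sweepAvg μi)^[k] g x| ≤ C :=
  Function.Iterate.rec (fun h : (Fin N → E) → ℝ => ∀ x, |h x| ≤ C) hC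
    (fun _ h => abs_foldr_siteAvg_le hprob _ h) k x

lemma integral_iterM_sweep (hμ : ∀ i, Measurable (μi i))
    (hprob : ∀ i x, IsProbabilityMeasure (μi i x)) (ν : Measure (Fin N → E))
    [IsProbabilityMeasure ν] (hg : Measurable g) (hC : ∀ x, |g x| ≤ C) (k : ℕ) :
    ∫ y, g y ∂iterM (sweep μi) k ν = ∫ x, (sweepAvg μi)^[k] g x ∂ν := by
  induction k generalizing g with
  | zero => rfl
  | succ k ih =>
    have hP := measurable_sweep hμ hprob
    have hP_prob (x : Fin N → E) : IsProbabilityMeasure (sweep μi x) :=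
      isProbabilityMeasure_foldl_bind_gstep hμ hprob _ _
    have : IsProbabilityMeasure ((iterM (sweep μi) k ν).bind (sweep μi)) :=
      isProbabilityMeasure_iterM hP hP_prob ν (k + 1)
    rw [iterM, integral_bind hP (integrable_of_abs_le hg.aestronglyMeasurable hC)]
    simp_rw [integral_sweep hμ hprob hg hC]
    rw [ih (g := sweepAvg μi g) (measurable_foldr_siteAvg hμ hprob _ hg)
      (abs_foldr_siteAvg_le hprob _ hC), Function.iterate_succ_apply]

theorem LipschitzSpecification.coordLipschitzWith_iterate_sweepAvg {d : E → E → ℝ}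
    {c : Fin N → Fin N → ℝ} {x₀ : E} (hS : LipschitzSpecification d μi c x₀) {δ : Fin N → ℝ}
    (hδ : ∀ i, 0 ≤ δ i) (hg_meas : Measurable g) (hC : ∀ x, |g x| ≤ C)
    (hg : CoordLipschitzWith d δ g) (k : ℕ) :
    CoordLipschitzWith d ((sweepCoef c)^[k] δ) ((sweepAvg μi)^[k] g) := by
  induction k with
  | zero => exact hg
  | succ k ih =>
    rw [Function.iterate_succ_apply', Function.iterate_succ_apply']
    exact hS.coordLipschitzWith_foldr_siteAvg
      (iterate_sweepCoef_nonneg hS.coeff_nonneg hδ k)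
      (measurable_iterate_sweepAvg hS.measurable hS.isProbabilityMeasure hg_meas k)
      (abs_iterate_sweepAvg_le hS.isProbabilityMeasure hC k) ih _

end Sweep

end GibbsSampler

open GibbsSampler in
theorem gibbs_sampler_convergence_rate_general
    {E : Type*} [MeasurableSpace E]
    {N : ℕ} (d : E → E → ℝ) (hd : IsDist d)
    (hd_meas : Measurable (fun p : E × E => d p.1 p.2))
    (μi : Fin N → (Fin N → E) → Measure E)
    (hprob : ∀ i x, IsProbabilityMeasure (μi i x))
    (hμ_meas : ∀ i, Measurable (μi i))
    (x₀ : E) (hmom : ∀ i x, Integrable (fun t => d t x₀) (μi i x))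
    (c : Fin N → Fin N → ℝ) (hc0 : ∀ i j, 0 ≤ c i j)
    (hc : ∀ i j : Fin N, ∀ x y : Fin N → E, (∀ l, l ≠ j → x l = y l) →
      W1 d (μi i x) (μi i y) ≤ c i j * d (x j) (y j))
    (r : ℝ) (hr : ∀ i, ∑ j, c i j ≤ r) (hr0 : 0 ≤ r) (hr1 : r < 1)
    (f : (Fin N → E) → ℝ) (hf_meas : Measurable f) (M : ℝ) (hf_bdd : ∀ x, |f x| ≤ M)
    (δ : Fin N → ℝ) (hδ0 : ∀ i, 0 ≤ δ i)
    (hδ : ∀ i : Fin N, ∀ x y : Fin N → E, (∀ j, j ≠ i → x j = y j) →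
      |f x - f y| ≤ δ i * d (x i) (y i))
    (ν₁ ν₂ : Measure (Fin N → E))
    (hν₁ : IsProbabilityMeasure ν₁) (hν₂ : IsProbabilityMeasure ν₂)
    (π : Measure ((Fin N → E) × (Fin N → E))) (hπ : IsProbabilityMeasure π)
    (hπ₁ : π.map Prod.fst = ν₁) (hπ₂ : π.map Prod.snd = ν₂)
    (hdint : ∀ i : Fin N,
      Integrable (fun p : (Fin N → E) × (Fin N → E) => d (p.1 i) (p.2 i)) π) :
    ∀ k : ℕ, 1 ≤ k →
      |(∫ y, f y ∂(iterM (sweep μi) k ν₁)) - ∫ y, f y ∂(iterM (sweep μi) k ν₂)| ≤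
        r ^ k * (⨆ i : Fin N, ∫ p, d (p.1 i) (p.2 i) ∂π) * ∑ i, δ i := by
  intro k _
  have hS : LipschitzSpecification d μi c x₀ := ⟨hd, hd_meas, hprob, hμ_meas, hmom, hc0, hc⟩
  rw [integral_iterM_sweep hμ_meas hprob ν₁ hf_meas hf_bdd,
    integral_iterM_sweep hμ_meas hprob ν₂ hf_meas hf_bdd]
  calc _ ≤ (∑ i, (sweepCoef c)^[k] δ i) * ⨆ i, ∫ p, d (p.1 i) (p.2 i) ∂π :=
        (hS.coordLipschitzWith_iterate_sweepAvg hδ0 hf_meas hf_bdd hδ k).abs_integral_sub_le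
          (iterate_sweepCoef_nonneg hc0 hδ0 k) (measurable_iterate_sweepAvg hμ_meas hprob hf_meas k)
          (abs_iterate_sweepAvg_le hprob hf_bdd k) hπ₁ hπ₂ hdint
    _ ≤ (r ^ k * ∑ i, δ i) * ⨆ i, ∫ p, d (p.1 i) (p.2 i) ∂π :=
        mul_le_mul_of_nonneg_right (sum_iterate_sweepCoef_le hc0 hr hr0 hr1.le hδ0 k)
          (Real.iSup_nonneg fun i => integral_nonneg fun p => hd.2.1 _ _)
    _ = _ := by ring

/-- (Gibbs sampler convergence rate, Theorem 2.3(a)). Under the Dobrushin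
uniqueness condition `r = ‖C‖_∞ < 1`, for any Lipschitz `f` with coordinatewise
Lipschitz coefficients `δ i`, any two initial distributions `ν₁, ν₂` and any coupling
`π` of `(ν₁, ν₂)`,
`|ν₁P^k f − ν₂P^k f| ≤ r^k (max_i E d(Z₀ⁱ(1), Z₀ⁱ(2))) ∑_i δ_i(f)` for all `k ≥ 1`. -/
theorem gibbs_sampler_convergence_rate
    {E : Type*} [MeasurableSpace E] [TopologicalSpace E] [PolishSpace E] [BorelSpace E]
    {N : ℕ} (d : E → E → ℝ) (hd : IsDist d)
    (hd_lsc : LowerSemicontinuous (fun p : E × E => d p.1 p.2))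
    (hd_meas : Measurable (fun p : E × E => d p.1 p.2))
    (μi : Fin N → (Fin N → E) → Measure E)
    (hprob : ∀ i x, IsProbabilityMeasure (μi i x))
    (hμ_meas : ∀ i, Measurable (μi i))
    (x₀ : E) (hmom : ∀ i x, Integrable (fun t => d t x₀) (μi i x))
    (c : Fin N → Fin N → ℝ) (hc0 : ∀ i j, 0 ≤ c i j)
    (hc : ∀ i j : Fin N, ∀ x y : Fin N → E, (∀ l, l ≠ j → x l = y l) →
      W1 d (μi i x) (μi i y) ≤ c i j * d (x j) (y j))
    (r : ℝ) (hr : ∀ i, ∑ j, c i j ≤ r) (hr0 : 0 ≤ r) (hr1 : r < 1)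
    (f : (Fin N → E) → ℝ) (hf_meas : Measurable f) (M : ℝ) (hf_bdd : ∀ x, |f x| ≤ M)
    (δ : Fin N → ℝ) (hδ0 : ∀ i, 0 ≤ δ i)
    (hδ : ∀ i : Fin N, ∀ x y : Fin N → E, (∀ j, j ≠ i → x j = y j) →
      |f x - f y| ≤ δ i * d (x i) (y i))
    (ν₁ ν₂ : Measure (Fin N → E))
    (hν₁ : IsProbabilityMeasure ν₁) (hν₂ : IsProbabilityMeasure ν₂)
    (π : Measure ((Fin N → E) × (Fin N → E))) (hπ : IsProbabilityMeasure π)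
    (hπ₁ : π.map Prod.fst = ν₁) (hπ₂ : π.map Prod.snd = ν₂)
    (hdint : ∀ i : Fin N,
      Integrable (fun p : (Fin N → E) × (Fin N → E) => d (p.1 i) (p.2 i)) π) :
    ∀ k : ℕ, 1 ≤ k →
      |(∫ y, f y ∂(iterM (sweep μi) k ν₁)) - ∫ y, f y ∂(iterM (sweep μi) k ν₂)| ≤
        r ^ k * (⨆ i : Fin N, ∫ p, d (p.1 i) (p.2 i) ∂π) * ∑ i, δ i :=
  gibbs_sampler_convergence_rate_general d hd hd_meas μi hprob hμ_meas x₀ hmom c hc0 hc r hr hr0 hr1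
    f hf_meas M hf_bdd δ hδ0 hδ ν₁ ν₂ hν₁ hν₂ π hπ hπ₁ hπ₂ hdint
end
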